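/- arXiv:math/0208119 — 2 statements merged into one kernel-verified Lean document; each statement's English description precedes it below -/
import Mathlib

section
/- In the graded quotient ring $R = \mathbb{Q}[y_1, y_{12}, y_{123}]/(y_1^2 + y_{12}^2 + y_{123}^2 - y_1 y_{12} - y_{12} y_{123},\; y_{12}^3 - 2 y_1 y_{12}^2 + 2 y_1^2 y_{12},\; y_1^4)$, the Hilbert series is $1 + 3t + 5t^2 + 6t^3 + 5t^4 + 3t^5 + t^6$ (each variable in degree 1); in particular $R$ has total dimension $24$ over $\mathbb{Q}$. -/
/-!
The relations are triangular: `y₁⁴` involves only `y₁`, the second relation is monic of degree 3 in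
`y₁₂` over `ℚ[y₁]`, and the first is monic of degree 2 in `y₁₂₃` over `ℚ[y₁, y₁₂]`. So `R` maps to
the tower of simple extensions `A₀ = ℚ[x]/(x⁴) → A₁ → A₂` obtained by adjoining roots of these
polynomials one at a time, and `A₂` is free over `ℚ` with basis `x^i y^j z^k`, `i < 4`, `j < 3`,
`k < 2`; hence the standard monomials `y₁^i y₁₂^j y₁₂₃^k` in this range are linearly independent in
`R`. Conversely, the relations rewrite `y₁⁴`, `y₁₂³` and `y₁₂₃²` as combinations of monomials of
the same degree and lexicographically smaller `(y₁₂₃, y₁₂)`-degree, so the standard monomials of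
degree `d` span the degree-`d` piece. Counting them gives `(1 + t + t² + t³)(1 + t + t²)(1 + t)`.
-/

open MvPolynomial

/-- The ideal of relations (iv): `y₁²+y₁₂²+y₁₂₃²-y₁y₁₂-y₁₂y₁₂₃`,
`y₁₂³-2y₁y₁₂²+2y₁²y₁₂`, `y₁⁴`, where `y₁ = X 0`, `y₁₂ = X 1`, `y₁₂₃ = X 2`. -/
noncomputable def flagRelIdeal : Ideal (MvPolynomial (Fin 3) ℚ) :=
  Ideal.span
    { X 0 ^ 2 + X 1 ^ 2 + X 2 ^ 2 - X 0 * X 1 - X 1 * X 2,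
      X 1 ^ 3 - 2 * X 0 * X 1 ^ 2 + 2 * X 0 ^ 2 * X 1,
      X 0 ^ 4 }

noncomputable section

open AdjoinRoot Polynomial in
lemma Polynomial.Monic.nontrivial_adjoinRoot {A : Type*} [CommRing A] [Nontrivial A] {f : A[X]}
    (hf : f.Monic) (hdeg : f.natDegree ≠ 0) : Nontrivial (AdjoinRoot f) :=
  ⟨⟨mk f 1, 0, mk_ne_zero_of_natDegree_lt hf one_ne_zero (by rw [natDegree_one]; omega)⟩⟩

namespace FlagModel

open AdjoinRoot
open scoped Polynomial

def f₀ : ℚ[X] := Polynomial.X ^ 4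

abbrev A₀ := AdjoinRoot f₀

def f₁ : A₀[X] :=
  Polynomial.X ^ 3 - Polynomial.C (2 * root f₀) * Polynomial.X ^ 2 +
    Polynomial.C (2 * root f₀ ^ 2) * Polynomial.X

abbrev A₁ := AdjoinRoot f₁

def f₂ : A₁[X] :=
  Polynomial.X ^ 2 - Polynomial.C (root f₁) * Polynomial.X +
    Polynomial.C (of f₁ (root f₀) ^ 2 + root f₁ ^ 2 - of f₁ (root f₀) * root f₁)

abbrev A₂ := AdjoinRoot f₂

lemma monic_f₀ : f₀.Monic := by unfold f₀; monicity!
lemma natDegree_f₀ : f₀.natDegree = 4 := by unfold f₀; compute_degree!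
instance : Nontrivial A₀ := monic_f₀.nontrivial_adjoinRoot (by rw [natDegree_f₀]; norm_num)
lemma monic_f₁ : f₁.Monic := by unfold f₁; monicity!
lemma natDegree_f₁ : f₁.natDegree = 3 := by unfold f₁; compute_degree!
instance : Nontrivial A₁ := monic_f₁.nontrivial_adjoinRoot (by rw [natDegree_f₁]; norm_num)
lemma monic_f₂ : f₂.Monic := by unfold f₂; monicity!
lemma natDegree_f₂ : f₂.natDegree = 2 := by unfold f₂; compute_degree!

def x : A₂ := of f₂ (of f₁ (root f₀))
def y : A₂ := of f₂ (root f₁)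
def z : A₂ := root f₂

lemma x_pow_four : x ^ 4 = 0 := by
  have h := eval₂_root f₀
  conv at h => enter [1, 3]; unfold f₀
  rw [Polynomial.eval₂_X_pow] at h
  rw [x, ← map_pow, ← map_pow, h, map_zero, map_zero]

lemma y_rel : y ^ 3 - 2 * x * y ^ 2 + 2 * x ^ 2 * y = 0 := by
  have h := congrArg (of f₂) (eval₂_root f₁)
  conv at h => enter [1, 2, 3]; unfold f₁
  simp only [Polynomial.eval₂_sub, Polynomial.eval₂_add, Polynomial.eval₂_mul,
    Polynomial.eval₂_X, Polynomial.eval₂_pow, Polynomial.eval₂_ofNat,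
    Polynomial.eval₂_C, map_sub, map_add, map_mul, map_pow, map_ofNat, map_zero] at h
  rw [x, y]
  linear_combination h

lemma z_rel : x ^ 2 + y ^ 2 + z ^ 2 - x * y - y * z = 0 := by
  have h := eval₂_root f₂
  conv at h => enter [1, 3]; unfold f₂
  simp only [Polynomial.eval₂_sub, Polynomial.eval₂_add, Polynomial.eval₂_mul,
    Polynomial.eval₂_X, Polynomial.eval₂_pow, Polynomial.eval₂_C, map_sub, map_add, map_mul,
    map_pow] at h
  rw [x, y, z]
  linear_combination h

def basis : Module.Basis (Fin 4 × Fin 3 × Fin 2) ℚ A₂ :=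
  ((powerBasis' monic_f₀).basis.reindex (finCongr natDegree_f₀)).smulTower
    (((powerBasis' monic_f₁).basis.reindex (finCongr natDegree_f₁)).smulTower
      ((powerBasis' monic_f₂).basis.reindex (finCongr natDegree_f₂)))

lemma basis_apply (t : Fin 4 × Fin 3 × Fin 2) :
    basis t = x ^ (t.1 : ℕ) * y ^ (t.2.1 : ℕ) * z ^ (t.2.2 : ℕ) := by
  simp only [basis, Module.Basis.smulTower_apply, Module.Basis.coe_reindex, PowerBasis.coe_basis,
    powerBasis'_gen, Function.comp_apply, Algebra.smul_def, AdjoinRoot.algebraMap_eq, map_pow,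
    IsScalarTower.algebraMap_apply A₀ A₁ A₂, x, y, z, mul_assoc]
  rfl

end FlagModel

local notation "π" => Ideal.Quotient.mkₐ ℚ flagRelIdeal

lemma aeval_eq_zero_of_mem_flagRelIdeal {B : Type*} [CommRing B] [Algebra ℚ B] {v : Fin 3 → B}
    (h₁ : v 0 ^ 2 + v 1 ^ 2 + v 2 ^ 2 - v 0 * v 1 - v 1 * v 2 = 0)
    (h₂ : v 1 ^ 3 - 2 * v 0 * v 1 ^ 2 + 2 * v 0 ^ 2 * v 1 = 0) (h₃ : v 0 ^ 4 = 0)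
    {p : MvPolynomial (Fin 3) ℚ} (hp : p ∈ flagRelIdeal) : aeval v p = 0 := by
  suffices flagRelIdeal ≤ RingHom.ker (aeval v) from this hp
  rw [flagRelIdeal, Ideal.span_le]
  rintro _ (rfl | rfl | rfl) <;> simpa

def toModel : (MvPolynomial (Fin 3) ℚ ⧸ flagRelIdeal) →ₐ[ℚ] FlagModel.A₂ :=
  Ideal.Quotient.liftₐ flagRelIdeal (aeval ![FlagModel.x, FlagModel.y, FlagModel.z])
    fun _ => aeval_eq_zero_of_mem_flagRelIdeal (by simpa using FlagModel.z_rel)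
      (by simpa using FlagModel.y_rel) (by simpa using FlagModel.x_pow_four)

def mon (a b c : ℕ) : MvPolynomial (Fin 3) ℚ := X 0 ^ a * X 1 ^ b * X 2 ^ c

abbrev StdExp := Fin 4 × Fin 3 × Fin 2

def StdExp.deg (t : StdExp) : ℕ := t.1 + t.2.1 + t.2.2

def stdMon (t : StdExp) : MvPolynomial (Fin 3) ℚ ⧸ flagRelIdeal := π (mon t.1 t.2.1 t.2.2)

lemma toModel_mk (p : MvPolynomial (Fin 3) ℚ) :
    toModel (π p) = aeval ![FlagModel.x, FlagModel.y, FlagModel.z] p :=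
  rfl

lemma toModel_stdMon (t : StdExp) : toModel (stdMon t) = FlagModel.basis t := by
  rw [stdMon, toModel_mk, FlagModel.basis_apply]
  simp [mon]

lemma linearIndependent_stdMon : LinearIndependent ℚ stdMon := by
  refine LinearIndependent.of_comp toModel.toLinearMap ?_
  convert FlagModel.basis.linearIndependent
  exact funext toModel_stdMon

def stdSpan (d : ℕ) : Submodule ℚ (MvPolynomial (Fin 3) ℚ ⧸ flagRelIdeal) :=
  Submodule.span ℚ (Set.range fun t : {t : StdExp // t.deg = d} => stdMon t)

lemma mk_eq_mk_of_sub_eq_mul {p q r g : MvPolynomial (Fin 3) ℚ} (hg : g ∈ flagRelIdeal)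
    (h : p - q = r * g) : π p = π q := by
  simpa [Ideal.Quotient.eq, h] using Ideal.mul_mem_left _ r hg

lemma mk_mon_add_four_left (a b c : ℕ) : π (mon (a + 4) b c) = 0 := by
  rw [← map_zero π]
  exact mk_eq_mk_of_sub_eq_mul (r := mon a b c) (g := X 0 ^ 4) (Ideal.subset_span (by simp))
    (by simp only [mon]; ring)

lemma mk_mon_add_three_mid (a b c : ℕ) :
    π (mon a (b + 3) c) = 2 • π (mon (a + 1) (b + 2) c) - 2 • π (mon (a + 2) (b + 1) c) := by
  rw [← map_nsmul, ← map_nsmul, ← map_sub]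
  exact mk_eq_mk_of_sub_eq_mul (r := mon a b c)
    (g := X 1 ^ 3 - 2 * X 0 * X 1 ^ 2 + 2 * X 0 ^ 2 * X 1)
    (Ideal.subset_span (by simp)) (by simp only [mon, nsmul_eq_mul]; ring)

lemma mk_mon_add_two_right (a b c : ℕ) :
    π (mon a b (c + 2)) = π (mon (a + 1) (b + 1) c) + π (mon a (b + 1) (c + 1))
      - π (mon (a + 2) b c) - π (mon a (b + 2) c) := by
  simp only [← map_add, ← map_sub]
  exact mk_eq_mk_of_sub_eq_mul (r := mon a b c)
    (g := X 0 ^ 2 + X 1 ^ 2 + X 2 ^ 2 - X 0 * X 1 - X 1 * X 2)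
    (Ideal.subset_span (by simp)) (by simp only [mon]; ring)

lemma mk_mon_mem_stdSpan_of_lt_two {c : ℕ} (hc : c < 2) (a b : ℕ) :
    π (mon a b c) ∈ stdSpan (a + b + c) := by
  induction b using Nat.strong_induction_on generalizing a with
  | _ b ih =>
  by_cases ha : 4 ≤ a
  · obtain ⟨a, rfl⟩ := Nat.exists_eq_add_of_le' ha
    rw [mk_mon_add_four_left]
    exact zero_mem _
  by_cases hb : 3 ≤ b
  · obtain ⟨b, rfl⟩ := Nat.exists_eq_add_of_le' hb
    rw [mk_mon_add_three_mid]
    refine sub_mem (Submodule.smul_of_tower_mem _ _ ?_) (Submodule.smul_of_tower_mem _ _ ?_)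
    · convert ih (b + 2) (by omega) (a + 1) using 2; omega
    · convert ih (b + 1) (by omega) (a + 2) using 2; omega
  exact Submodule.subset_span ⟨⟨(⟨a, by omega⟩, ⟨b, by omega⟩, ⟨c, hc⟩), rfl⟩, rfl⟩

lemma mk_mon_mem_stdSpan (a b c : ℕ) : π (mon a b c) ∈ stdSpan (a + b + c) := by
  induction c using Nat.strong_induction_on generalizing a b with
  | _ c ih =>
  by_cases hc : 2 ≤ c
  · obtain ⟨c, rfl⟩ := Nat.exists_eq_add_of_le' hc
    rw [mk_mon_add_two_right]
    refine sub_mem (sub_mem (add_mem ?_ ?_) ?_) ?_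
    · convert ih c (by omega) (a + 1) (b + 1) using 2; omega
    · convert ih (c + 1) (by omega) a (b + 1) using 2; omega
    · convert ih c (by omega) (a + 2) b using 2; omega
    · convert ih c (by omega) a (b + 2) using 2; omega
  exact mk_mon_mem_stdSpan_of_lt_two (by omega) a b

lemma monomial_eq_smul_mon (s : Fin 3 →₀ ℕ) (r : ℚ) :
    monomial s r = r • mon (s 0) (s 1) (s 2) := by
  simp [monomial_eq, Finsupp.prod_fintype, Fin.prod_univ_three, mon, smul_eq_C_mul, mul_assoc]

lemma mk_monomial_mem_stdSpan (s : Fin 3 →₀ ℕ) (r : ℚ) :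
    π (monomial s r) ∈ stdSpan s.degree := by
  rw [monomial_eq_smul_mon, map_smul, Finsupp.degree_eq_sum, Fin.sum_univ_three]
  exact Submodule.smul_mem _ r (mk_mon_mem_stdSpan _ _ _)

lemma map_homogeneousSubmodule_eq_stdSpan (d : ℕ) :
    (homogeneousSubmodule (Fin 3) ℚ d).map (π).toLinearMap = stdSpan d := by
  refine le_antisymm ?_ (Submodule.span_le.mpr ?_)
  · rintro _ ⟨p, hp, rfl⟩
    rw [AlgHom.toLinearMap_apply, ← p.support_sum_monomial_coeff, map_sum]
    refine Submodule.sum_mem _ fun s hs => ?_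
    have hs : s.degree = d := by
      rw [Finsupp.degree_eq_weight_one]; exact hp (mem_support_iff.mp hs)
    exact hs ▸ mk_monomial_mem_stdSpan s _
  · rintro _ ⟨⟨t, rfl⟩, rfl⟩
    refine ⟨mon t.1 t.2.1 t.2.2, ?_, rfl⟩
    exact ((isHomogeneous_X_pow 0 _).mul (isHomogeneous_X_pow 1 _)).mul (isHomogeneous_X_pow 2 _)

lemma span_stdMon_eq_top : Submodule.span ℚ (Set.range stdMon) = ⊤ := by
  refine Submodule.eq_top_iff'.mpr fun v => ?_
  obtain ⟨p, rfl⟩ := Ideal.Quotient.mkₐ_surjective ℚ flagRelIdeal v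
  induction p using MvPolynomial.induction_on' with
  | monomial s r =>
    exact Submodule.span_mono (Set.range_comp_subset_range Subtype.val stdMon)
      (mk_monomial_mem_stdSpan s r)
  | add p q hp hq => exact (map_add π p q).symm ▸ add_mem hp hq

def stdBasis : Module.Basis StdExp ℚ (MvPolynomial (Fin 3) ℚ ⧸ flagRelIdeal) :=
  .mk linearIndependent_stdMon span_stdMon_eq_top.ge

lemma finrank_stdSpan (d : ℕ) :
    Module.finrank ℚ (stdSpan d) = Fintype.card {t : StdExp // t.deg = d} :=
  finrank_span_eq_card (linearIndependent_stdMon.comp _ Subtype.val_injective)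

lemma card_deg_eq_coeff (d : ℕ) :
    Fintype.card {t : StdExp // t.deg = d} =
      ((1 + 3 * Polynomial.X + 5 * Polynomial.X ^ 2 + 6 * Polynomial.X ^ 3 +
        5 * Polynomial.X ^ 4 + 3 * Polynomial.X ^ 5 +
        Polynomial.X ^ 6 : Polynomial ℕ)).coeff d := by
  rcases lt_or_ge d 7 with hd | hd
  · simp only [Polynomial.coeff_add, Polynomial.coeff_one, Polynomial.coeff_ofNat_mul,
      Polynomial.coeff_X, Polynomial.coeff_X_pow]
    interval_cases d <;> decide
  · rw [Polynomial.coeff_eq_zero_of_natDegree_lt (by compute_degree!), Fintype.card_eq_zero_iff]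
    refine ⟨fun ⟨⟨i, j, k⟩, h⟩ => ?_⟩
    simp only [StdExp.deg] at h
    omega

/-- The Hilbert series of
`R = ℚ[y₁,y₁₂,y₁₂₃]/(y₁²+y₁₂²+y₁₂₃²-y₁y₁₂-y₁₂y₁₂₃, y₁₂³-2y₁y₁₂²+2y₁²y₁₂, y₁⁴)`
(variables in degree 1) is `1+3t+5t²+6t³+5t⁴+3t⁵+t⁶`; in particular `R` has total
dimension `24` over `ℚ`.  The degree-`d` graded piece of `R` is the image of the
homogeneous polynomials of degree `d` under the quotient map. -/
theorem flag_ring_hilbert_series :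
    (∀ d : ℕ,
      Module.finrank ℚ
        ((MvPolynomial.homogeneousSubmodule (Fin 3) ℚ d).map
          (Ideal.Quotient.mkₐ ℚ flagRelIdeal).toLinearMap) =
      ((1 + 3 * Polynomial.X + 5 * Polynomial.X ^ 2 + 6 * Polynomial.X ^ 3 +
        5 * Polynomial.X ^ 4 + 3 * Polynomial.X ^ 5 +
        Polynomial.X ^ 6 : Polynomial ℕ)).coeff d) ∧
    Module.finrank ℚ (MvPolynomial (Fin 3) ℚ ⧸ flagRelIdeal) = 24 := by
  refine ⟨fun d => ?_, ?_⟩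
  · rw [map_homogeneousSubmodule_eq_stdSpan, finrank_stdSpan, card_deg_eq_coeff]
  · rw [Module.finrank_eq_card_basis stdBasis]
    rfl

end
end

section
/- In $R = \mathbb{Q}[y_1,y_{12},y_{123}]/(y_1^2+y_{12}^2+y_{123}^2-y_1y_{12}-y_{12}y_{123},\, y_{12}^3-2y_1y_{12}^2+2y_1^2y_{12},\, y_1^4)$, the degree-6 component is one-dimensional and the class of $y_1^3 y_{12}^2 y_{123}$ is a nonzero element of it. -/
open MvPolynomial

abbrev P3 := MvPolynomial (Fin 3) ℚ

noncomputable def ee (a b c : ℕ) : Fin 3 →₀ ℕ :=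
  Finsupp.single 0 a + Finsupp.single 1 b + Finsupp.single 2 c

lemma ee_eq (u : Fin 3 →₀ ℕ) : ee (u 0) (u 1) (u 2) = u := by
  ext i; fin_cases i <;> simp [ee, Finsupp.single_apply]

lemma degree_three (u : Fin 3 →₀ ℕ) : u.degree = u 0 + u 1 + u 2 := by
  rw [Finsupp.degree_apply, Finset.sum_subset (Finset.subset_univ _)
    (fun i _ hi => Finsupp.notMem_support_iff.1 hi), Fin.sum_univ_three]

lemma degree_ee (a b c : ℕ) : (ee a b c).degree = a + b + c := by
  rw [degree_three]; simp [ee, Finsupp.single_apply]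

lemma monomial_ee (a b c : ℕ) :
    (monomial (ee a b c) (1:ℚ) : P3) = X 0 ^ a * X 1 ^ b * X 2 ^ c := by
  rw [ee, X_pow_eq_monomial, X_pow_eq_monomial, X_pow_eq_monomial, monomial_mul, monomial_mul]
  simp

lemma monomial_eeC (a b c : ℕ) (r : ℚ) :
    (monomial (ee a b c) r : P3) = C r * (X 0 ^ a * X 1 ^ b * X 2 ^ c) := by
  rw [← monomial_ee, C_mul_monomial, mul_one]

lemma coeff_ee (a b c a' b' c' : ℕ) :
    coeff (ee a b c) ((X 0:P3) ^ a' * X 1 ^ b' * X 2 ^ c') =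
      if a = a' ∧ b = b' ∧ c = c' then 1 else 0 := by
  have hiff : (ee a' b' c' = ee a b c) ↔ (a = a' ∧ b = b' ∧ c = c') := by
    constructor
    · intro h
      have h0 := DFunLike.congr_fun h 0
      have h1 := DFunLike.congr_fun h 1
      have h2 := DFunLike.congr_fun h 2
      simp [ee, Finsupp.single_apply] at h0 h1 h2
      exact ⟨h0.symm, h1.symm, h2.symm⟩
    · rintro ⟨rfl, rfl, rfl⟩; rfl
  rw [← monomial_ee, coeff_monomial, if_congr hiff rfl rfl]

lemma coeff_two_mul (m : Fin 3 →₀ ℕ) (f : P3) : coeff m (2 * f) = 2 * coeff m f := by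
  rw [show (2:P3) = C 2 from (map_ofNat C 2).symm, coeff_C_mul]

noncomputable def G1 : P3 := X 0 ^ 2 + X 1 ^ 2 + X 2 ^ 2 - X 0 * X 1 - X 1 * X 2
noncomputable def G2 : P3 := X 1 ^ 3 - 2 * X 0 * X 1 ^ 2 + 2 * X 0 ^ 2 * X 1
noncomputable def G3 : P3 := X 0 ^ 4
noncomputable def Pc : P3 := X 0 ^ 3 * X 1 ^ 2 * X 2
lemma G1_def : G1 = X 0 ^ 2 + X 1 ^ 2 + X 2 ^ 2 - X 0 * X 1 - X 1 * X 2 := rfl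
lemma G2_def : G2 = X 1 ^ 3 - 2 * X 0 * X 1 ^ 2 + 2 * X 0 ^ 2 * X 1 := rfl
lemma G3_def : G3 = X 0 ^ 4 := rfl
lemma Pc_def : Pc = X 0 ^ 3 * X 1 ^ 2 * X 2 := rfl

lemma hG1 : G1 ∈ flagRelIdeal := by
  rw [flagRelIdeal]; exact Ideal.subset_span (by simp [G1_def])
lemma hG2 : G2 ∈ flagRelIdeal := by
  rw [flagRelIdeal]; exact Ideal.subset_span (by simp [G2_def])
lemma hG3 : G3 ∈ flagRelIdeal := by
  rw [flagRelIdeal]; exact Ideal.subset_span (by simp [G3_def])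

lemma mem_I {f : P3} (c1 c2 c3 : P3) (h : f = c1 * G1 + c2 * G2 + c3 * G3) :
    f ∈ flagRelIdeal := by
  rw [h]
  exact add_mem (add_mem (Ideal.mul_mem_left _ _ hG1) (Ideal.mul_mem_left _ _ hG2))
    (Ideal.mul_mem_left _ _ hG3)

lemma hG1hom : G1.IsHomogeneous 2 := by
  have h : G1 = monomial (ee 2 0 0) (1:ℚ) + monomial (ee 0 2 0) 1 + monomial (ee 0 0 2) 1
      + monomial (ee 1 1 0) (-1) + monomial (ee 0 1 1) (-1) := by
    simp only [monomial_eeC, map_one, map_neg, G1_def]; ring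
  rw [h]
  exact ((((isHomogeneous_monomial _ (by simp [degree_ee])).add
    (isHomogeneous_monomial _ (by simp [degree_ee]))).add
    (isHomogeneous_monomial _ (by simp [degree_ee]))).add
    (isHomogeneous_monomial _ (by simp [degree_ee]))).add
    (isHomogeneous_monomial _ (by simp [degree_ee]))

lemma hG2hom : G2.IsHomogeneous 3 := by
  have h : G2 = monomial (ee 0 3 0) (1:ℚ) + monomial (ee 1 2 0) (-2) + monomial (ee 2 1 0) 2 := by
    simp only [monomial_eeC, map_one, map_neg, map_ofNat, G2_def]; ring
  rw [h]
  exact ((isHomogeneous_monomial _ (by simp [degree_ee])).add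
    (isHomogeneous_monomial _ (by simp [degree_ee]))).add
    (isHomogeneous_monomial _ (by simp [degree_ee]))

lemma hG3hom : G3.IsHomogeneous 4 := by
  have h : G3 = monomial (ee 4 0 0) (1:ℚ) := by
    simp only [monomial_eeC, map_one, G3_def]; ring
  rw [h]
  exact isHomogeneous_monomial _ (by simp [degree_ee])

lemma hPchom : Pc.IsHomogeneous 6 := by
  have h : Pc = monomial (ee 3 2 1) (1:ℚ) := by
    simp only [monomial_eeC, map_one, Pc_def]; ring
  rw [h]
  exact isHomogeneous_monomial _ (by simp [degree_ee])

noncomputable def Lfun : P3 →ₗ[ℚ] ℚ :=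
  lcoeff ℚ (ee 1 2 3) + (2:ℚ) • lcoeff ℚ (ee 1 3 2) + (2:ℚ) • lcoeff ℚ (ee 1 4 1) +
  lcoeff ℚ (ee 2 1 3) + (2:ℚ) • lcoeff ℚ (ee 2 2 2) + (2:ℚ) • lcoeff ℚ (ee 2 3 1) +
  lcoeff ℚ (ee 3 1 2) + lcoeff ℚ (ee 3 2 1)

lemma Lfun_apply (f : P3) : Lfun f =
    coeff (ee 1 2 3) f + 2 * coeff (ee 1 3 2) f + 2 * coeff (ee 1 4 1) f +
    coeff (ee 2 1 3) f + 2 * coeff (ee 2 2 2) f + 2 * coeff (ee 2 3 1) f +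
    coeff (ee 3 1 2) f + coeff (ee 3 2 1) f := by
  simp [Lfun, smul_eq_mul]

lemma Lfun_homog {f : P3} {n : ℕ} (hf : f.IsHomogeneous n) (hn : n ≠ 6) : Lfun f = 0 := by
  have h : ∀ a b c : ℕ, a + b + c = 6 → coeff (ee a b c) f = 0 := fun a b c habc =>
    hf.coeff_eq_zero (by rw [degree_ee, habc]; omega)
  rw [Lfun_apply, h 1 2 3 (by norm_num), h 1 3 2 (by norm_num), h 1 4 1 (by norm_num),
    h 2 1 3 (by norm_num), h 2 2 2 (by norm_num), h 2 3 1 (by norm_num),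
    h 3 1 2 (by norm_num), h 3 2 1 (by norm_num)]
  norm_num

lemma Lfun_mul_eq_zero (g : P3) (d : ℕ) (_hd : d ≤ 6) (hg : g.IsHomogeneous d)
    (h : ∀ a b c : ℕ, a + b + c + d = 6 → Lfun (X 0 ^ a * X 1 ^ b * X 2 ^ c * g) = 0)
    (f : P3) : Lfun (f * g) = 0 := by
  conv_lhs => rw [f.as_sum]
  rw [Finset.sum_mul, map_sum]
  apply Finset.sum_eq_zero
  intro u _
  have hsplit : (monomial u (coeff u f) : P3) * g = coeff u f • (monomial u 1 * g) := by
    rw [← smul_mul_assoc, smul_monomial, smul_eq_mul, mul_one]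
  rw [hsplit, map_smul, smul_eq_mul]
  by_cases hcase : u 0 + u 1 + u 2 + d = 6
  · rw [show (monomial u (1:ℚ) : P3) = X 0 ^ (u 0) * X 1 ^ (u 1) * X 2 ^ (u 2) from
      by rw [← monomial_ee, ee_eq], h _ _ _ hcase, mul_zero]
  · have hmon : (monomial u (1:ℚ) : P3).IsHomogeneous u.degree :=
      isHomogeneous_monomial _ rfl
    rw [Lfun_homog (hmon.mul hg) (by rw [degree_three]; omega), mul_zero]

lemma span_helper {q : P3} (r : ℚ) (h : q - C r * Pc ∈ flagRelIdeal) :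
    Ideal.Quotient.mk flagRelIdeal q ∈
      Submodule.span ℚ {Ideal.Quotient.mk flagRelIdeal Pc} := by
  rw [Submodule.mem_span_singleton]
  refine ⟨r, ?_⟩
  have h2 : Ideal.Quotient.mk flagRelIdeal (q - C r * Pc) = 0 :=
    (Ideal.Quotient.eq_zero_iff_mem).2 h
  rw [map_sub, sub_eq_zero] at h2
  calc r • Ideal.Quotient.mk flagRelIdeal Pc
      = r • (Ideal.Quotient.mkₐ ℚ flagRelIdeal Pc) := by rw [Ideal.Quotient.mkₐ_eq_mk]
    _ = Ideal.Quotient.mkₐ ℚ flagRelIdeal (r • Pc) := (map_smul _ r _).symm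
    _ = Ideal.Quotient.mk flagRelIdeal (C r * Pc) := by
        rw [smul_eq_C_mul, Ideal.Quotient.mkₐ_eq_mk]
    _ = Ideal.Quotient.mk flagRelIdeal q := h2.symm

lemma hC0 : (C (0:ℚ) : P3) = 0 := map_zero C
lemma hC1 : (C (1:ℚ) : P3) = 1 := map_one C
lemma hC2 : (C (2:ℚ) : P3) = 2 := map_ofNat C 2

lemma Lcase_G1_0_0_4 : Lfun ((X 0:P3) ^ 0 * X 1 ^ 0 * X 2 ^ 4 * G1) = 0 := by
  have h : ((X 0:P3) ^ 0 * X 1 ^ 0 * X 2 ^ 4 * G1) = X 0 ^ 0 * X 1 ^ 0 * X 2 ^ 6 + X 0 ^ 0 * X 1 ^ 2 * X 2 ^ 4 + X 0 ^ 2 * X 1 ^ 0 * X 2 ^ 4 - X 0 ^ 0 * X 1 ^ 1 * X 2 ^ 5 - X 0 ^ 1 * X 1 ^ 1 * X 2 ^ 4 := by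
    rw [G1_def]; ring
  rw [h, Lfun_apply]
  simp only [coeff_add, coeff_sub, coeff_two_mul, coeff_ee]
  norm_num

lemma Lcase_G1_0_1_3 : Lfun ((X 0:P3) ^ 0 * X 1 ^ 1 * X 2 ^ 3 * G1) = 0 := by
  have h : ((X 0:P3) ^ 0 * X 1 ^ 1 * X 2 ^ 3 * G1) = X 0 ^ 0 * X 1 ^ 1 * X 2 ^ 5 + X 0 ^ 0 * X 1 ^ 3 * X 2 ^ 3 + X 0 ^ 2 * X 1 ^ 1 * X 2 ^ 3 - X 0 ^ 0 * X 1 ^ 2 * X 2 ^ 4 - X 0 ^ 1 * X 1 ^ 2 * X 2 ^ 3 := by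
    rw [G1_def]; ring
  rw [h, Lfun_apply]
  simp only [coeff_add, coeff_sub, coeff_two_mul, coeff_ee]
  norm_num

lemma Lcase_G1_0_2_2 : Lfun ((X 0:P3) ^ 0 * X 1 ^ 2 * X 2 ^ 2 * G1) = 0 := by
  have h : ((X 0:P3) ^ 0 * X 1 ^ 2 * X 2 ^ 2 * G1) = X 0 ^ 0 * X 1 ^ 2 * X 2 ^ 4 + X 0 ^ 0 * X 1 ^ 4 * X 2 ^ 2 + X 0 ^ 2 * X 1 ^ 2 * X 2 ^ 2 - X 0 ^ 0 * X 1 ^ 3 * X 2 ^ 3 - X 0 ^ 1 * X 1 ^ 3 * X 2 ^ 2 := by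
    rw [G1_def]; ring
  rw [h, Lfun_apply]
  simp only [coeff_add, coeff_sub, coeff_two_mul, coeff_ee]
  norm_num

lemma Lcase_G1_0_3_1 : Lfun ((X 0:P3) ^ 0 * X 1 ^ 3 * X 2 ^ 1 * G1) = 0 := by
  have h : ((X 0:P3) ^ 0 * X 1 ^ 3 * X 2 ^ 1 * G1) = X 0 ^ 0 * X 1 ^ 3 * X 2 ^ 3 + X 0 ^ 0 * X 1 ^ 5 * X 2 ^ 1 + X 0 ^ 2 * X 1 ^ 3 * X 2 ^ 1 - X 0 ^ 0 * X 1 ^ 4 * X 2 ^ 2 - X 0 ^ 1 * X 1 ^ 4 * X 2 ^ 1 := by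
    rw [G1_def]; ring
  rw [h, Lfun_apply]
  simp only [coeff_add, coeff_sub, coeff_two_mul, coeff_ee]
  norm_num

lemma Lcase_G1_0_4_0 : Lfun ((X 0:P3) ^ 0 * X 1 ^ 4 * X 2 ^ 0 * G1) = 0 := by
  have h : ((X 0:P3) ^ 0 * X 1 ^ 4 * X 2 ^ 0 * G1) = X 0 ^ 0 * X 1 ^ 4 * X 2 ^ 2 + X 0 ^ 0 * X 1 ^ 6 * X 2 ^ 0 + X 0 ^ 2 * X 1 ^ 4 * X 2 ^ 0 - X 0 ^ 0 * X 1 ^ 5 * X 2 ^ 1 - X 0 ^ 1 * X 1 ^ 5 * X 2 ^ 0 := by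
    rw [G1_def]; ring
  rw [h, Lfun_apply]
  simp only [coeff_add, coeff_sub, coeff_two_mul, coeff_ee]
  norm_num

lemma Lcase_G1_1_0_3 : Lfun ((X 0:P3) ^ 1 * X 1 ^ 0 * X 2 ^ 3 * G1) = 0 := by
  have h : ((X 0:P3) ^ 1 * X 1 ^ 0 * X 2 ^ 3 * G1) = X 0 ^ 1 * X 1 ^ 0 * X 2 ^ 5 + X 0 ^ 1 * X 1 ^ 2 * X 2 ^ 3 + X 0 ^ 3 * X 1 ^ 0 * X 2 ^ 3 - X 0 ^ 1 * X 1 ^ 1 * X 2 ^ 4 - X 0 ^ 2 * X 1 ^ 1 * X 2 ^ 3 := by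
    rw [G1_def]; ring
  rw [h, Lfun_apply]
  simp only [coeff_add, coeff_sub, coeff_two_mul, coeff_ee]
  norm_num

lemma Lcase_G1_1_1_2 : Lfun ((X 0:P3) ^ 1 * X 1 ^ 1 * X 2 ^ 2 * G1) = 0 := by
  have h : ((X 0:P3) ^ 1 * X 1 ^ 1 * X 2 ^ 2 * G1) = X 0 ^ 1 * X 1 ^ 1 * X 2 ^ 4 + X 0 ^ 1 * X 1 ^ 3 * X 2 ^ 2 + X 0 ^ 3 * X 1 ^ 1 * X 2 ^ 2 - X 0 ^ 1 * X 1 ^ 2 * X 2 ^ 3 - X 0 ^ 2 * X 1 ^ 2 * X 2 ^ 2 := by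
    rw [G1_def]; ring
  rw [h, Lfun_apply]
  simp only [coeff_add, coeff_sub, coeff_two_mul, coeff_ee]
  norm_num

lemma Lcase_G1_1_2_1 : Lfun ((X 0:P3) ^ 1 * X 1 ^ 2 * X 2 ^ 1 * G1) = 0 := by
  have h : ((X 0:P3) ^ 1 * X 1 ^ 2 * X 2 ^ 1 * G1) = X 0 ^ 1 * X 1 ^ 2 * X 2 ^ 3 + X 0 ^ 1 * X 1 ^ 4 * X 2 ^ 1 + X 0 ^ 3 * X 1 ^ 2 * X 2 ^ 1 - X 0 ^ 1 * X 1 ^ 3 * X 2 ^ 2 - X 0 ^ 2 * X 1 ^ 3 * X 2 ^ 1 := by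
    rw [G1_def]; ring
  rw [h, Lfun_apply]
  simp only [coeff_add, coeff_sub, coeff_two_mul, coeff_ee]
  norm_num

lemma Lcase_G1_1_3_0 : Lfun ((X 0:P3) ^ 1 * X 1 ^ 3 * X 2 ^ 0 * G1) = 0 := by
  have h : ((X 0:P3) ^ 1 * X 1 ^ 3 * X 2 ^ 0 * G1) = X 0 ^ 1 * X 1 ^ 3 * X 2 ^ 2 + X 0 ^ 1 * X 1 ^ 5 * X 2 ^ 0 + X 0 ^ 3 * X 1 ^ 3 * X 2 ^ 0 - X 0 ^ 1 * X 1 ^ 4 * X 2 ^ 1 - X 0 ^ 2 * X 1 ^ 4 * X 2 ^ 0 := by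
    rw [G1_def]; ring
  rw [h, Lfun_apply]
  simp only [coeff_add, coeff_sub, coeff_two_mul, coeff_ee]
  norm_num

lemma Lcase_G1_2_0_2 : Lfun ((X 0:P3) ^ 2 * X 1 ^ 0 * X 2 ^ 2 * G1) = 0 := by
  have h : ((X 0:P3) ^ 2 * X 1 ^ 0 * X 2 ^ 2 * G1) = X 0 ^ 2 * X 1 ^ 0 * X 2 ^ 4 + X 0 ^ 2 * X 1 ^ 2 * X 2 ^ 2 + X 0 ^ 4 * X 1 ^ 0 * X 2 ^ 2 - X 0 ^ 2 * X 1 ^ 1 * X 2 ^ 3 - X 0 ^ 3 * X 1 ^ 1 * X 2 ^ 2 := by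
    rw [G1_def]; ring
  rw [h, Lfun_apply]
  simp only [coeff_add, coeff_sub, coeff_two_mul, coeff_ee]
  norm_num

lemma Lcase_G1_2_1_1 : Lfun ((X 0:P3) ^ 2 * X 1 ^ 1 * X 2 ^ 1 * G1) = 0 := by
  have h : ((X 0:P3) ^ 2 * X 1 ^ 1 * X 2 ^ 1 * G1) = X 0 ^ 2 * X 1 ^ 1 * X 2 ^ 3 + X 0 ^ 2 * X 1 ^ 3 * X 2 ^ 1 + X 0 ^ 4 * X 1 ^ 1 * X 2 ^ 1 - X 0 ^ 2 * X 1 ^ 2 * X 2 ^ 2 - X 0 ^ 3 * X 1 ^ 2 * X 2 ^ 1 := by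
    rw [G1_def]; ring
  rw [h, Lfun_apply]
  simp only [coeff_add, coeff_sub, coeff_two_mul, coeff_ee]
  norm_num

lemma Lcase_G1_2_2_0 : Lfun ((X 0:P3) ^ 2 * X 1 ^ 2 * X 2 ^ 0 * G1) = 0 := by
  have h : ((X 0:P3) ^ 2 * X 1 ^ 2 * X 2 ^ 0 * G1) = X 0 ^ 2 * X 1 ^ 2 * X 2 ^ 2 + X 0 ^ 2 * X 1 ^ 4 * X 2 ^ 0 + X 0 ^ 4 * X 1 ^ 2 * X 2 ^ 0 - X 0 ^ 2 * X 1 ^ 3 * X 2 ^ 1 - X 0 ^ 3 * X 1 ^ 3 * X 2 ^ 0 := by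
    rw [G1_def]; ring
  rw [h, Lfun_apply]
  simp only [coeff_add, coeff_sub, coeff_two_mul, coeff_ee]
  norm_num

lemma Lcase_G1_3_0_1 : Lfun ((X 0:P3) ^ 3 * X 1 ^ 0 * X 2 ^ 1 * G1) = 0 := by
  have h : ((X 0:P3) ^ 3 * X 1 ^ 0 * X 2 ^ 1 * G1) = X 0 ^ 3 * X 1 ^ 0 * X 2 ^ 3 + X 0 ^ 3 * X 1 ^ 2 * X 2 ^ 1 + X 0 ^ 5 * X 1 ^ 0 * X 2 ^ 1 - X 0 ^ 3 * X 1 ^ 1 * X 2 ^ 2 - X 0 ^ 4 * X 1 ^ 1 * X 2 ^ 1 := by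
    rw [G1_def]; ring
  rw [h, Lfun_apply]
  simp only [coeff_add, coeff_sub, coeff_two_mul, coeff_ee]
  norm_num

lemma Lcase_G1_3_1_0 : Lfun ((X 0:P3) ^ 3 * X 1 ^ 1 * X 2 ^ 0 * G1) = 0 := by
  have h : ((X 0:P3) ^ 3 * X 1 ^ 1 * X 2 ^ 0 * G1) = X 0 ^ 3 * X 1 ^ 1 * X 2 ^ 2 + X 0 ^ 3 * X 1 ^ 3 * X 2 ^ 0 + X 0 ^ 5 * X 1 ^ 1 * X 2 ^ 0 - X 0 ^ 3 * X 1 ^ 2 * X 2 ^ 1 - X 0 ^ 4 * X 1 ^ 2 * X 2 ^ 0 := by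
    rw [G1_def]; ring
  rw [h, Lfun_apply]
  simp only [coeff_add, coeff_sub, coeff_two_mul, coeff_ee]
  norm_num

lemma Lcase_G1_4_0_0 : Lfun ((X 0:P3) ^ 4 * X 1 ^ 0 * X 2 ^ 0 * G1) = 0 := by
  have h : ((X 0:P3) ^ 4 * X 1 ^ 0 * X 2 ^ 0 * G1) = X 0 ^ 4 * X 1 ^ 0 * X 2 ^ 2 + X 0 ^ 4 * X 1 ^ 2 * X 2 ^ 0 + X 0 ^ 6 * X 1 ^ 0 * X 2 ^ 0 - X 0 ^ 4 * X 1 ^ 1 * X 2 ^ 1 - X 0 ^ 5 * X 1 ^ 1 * X 2 ^ 0 := by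
    rw [G1_def]; ring
  rw [h, Lfun_apply]
  simp only [coeff_add, coeff_sub, coeff_two_mul, coeff_ee]
  norm_num

lemma Lcase_G2_0_0_3 : Lfun ((X 0:P3) ^ 0 * X 1 ^ 0 * X 2 ^ 3 * G2) = 0 := by
  have h : ((X 0:P3) ^ 0 * X 1 ^ 0 * X 2 ^ 3 * G2) = X 0 ^ 0 * X 1 ^ 3 * X 2 ^ 3 + 2 * (X 0 ^ 2 * X 1 ^ 1 * X 2 ^ 3) - 2 * (X 0 ^ 1 * X 1 ^ 2 * X 2 ^ 3) := by
    rw [G2_def]; ring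
  rw [h, Lfun_apply]
  simp only [coeff_add, coeff_sub, coeff_two_mul, coeff_ee]
  norm_num

lemma Lcase_G2_0_1_2 : Lfun ((X 0:P3) ^ 0 * X 1 ^ 1 * X 2 ^ 2 * G2) = 0 := by
  have h : ((X 0:P3) ^ 0 * X 1 ^ 1 * X 2 ^ 2 * G2) = X 0 ^ 0 * X 1 ^ 4 * X 2 ^ 2 + 2 * (X 0 ^ 2 * X 1 ^ 2 * X 2 ^ 2) - 2 * (X 0 ^ 1 * X 1 ^ 3 * X 2 ^ 2) := by
    rw [G2_def]; ring
  rw [h, Lfun_apply]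
  simp only [coeff_add, coeff_sub, coeff_two_mul, coeff_ee]
  norm_num

lemma Lcase_G2_0_2_1 : Lfun ((X 0:P3) ^ 0 * X 1 ^ 2 * X 2 ^ 1 * G2) = 0 := by
  have h : ((X 0:P3) ^ 0 * X 1 ^ 2 * X 2 ^ 1 * G2) = X 0 ^ 0 * X 1 ^ 5 * X 2 ^ 1 + 2 * (X 0 ^ 2 * X 1 ^ 3 * X 2 ^ 1) - 2 * (X 0 ^ 1 * X 1 ^ 4 * X 2 ^ 1) := by
    rw [G2_def]; ring
  rw [h, Lfun_apply]
  simp only [coeff_add, coeff_sub, coeff_two_mul, coeff_ee]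
  norm_num

lemma Lcase_G2_0_3_0 : Lfun ((X 0:P3) ^ 0 * X 1 ^ 3 * X 2 ^ 0 * G2) = 0 := by
  have h : ((X 0:P3) ^ 0 * X 1 ^ 3 * X 2 ^ 0 * G2) = X 0 ^ 0 * X 1 ^ 6 * X 2 ^ 0 + 2 * (X 0 ^ 2 * X 1 ^ 4 * X 2 ^ 0) - 2 * (X 0 ^ 1 * X 1 ^ 5 * X 2 ^ 0) := by
    rw [G2_def]; ring
  rw [h, Lfun_apply]
  simp only [coeff_add, coeff_sub, coeff_two_mul, coeff_ee]
  norm_num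

lemma Lcase_G2_1_0_2 : Lfun ((X 0:P3) ^ 1 * X 1 ^ 0 * X 2 ^ 2 * G2) = 0 := by
  have h : ((X 0:P3) ^ 1 * X 1 ^ 0 * X 2 ^ 2 * G2) = X 0 ^ 1 * X 1 ^ 3 * X 2 ^ 2 + 2 * (X 0 ^ 3 * X 1 ^ 1 * X 2 ^ 2) - 2 * (X 0 ^ 2 * X 1 ^ 2 * X 2 ^ 2) := by
    rw [G2_def]; ring
  rw [h, Lfun_apply]
  simp only [coeff_add, coeff_sub, coeff_two_mul, coeff_ee]
  norm_num

lemma Lcase_G2_1_1_1 : Lfun ((X 0:P3) ^ 1 * X 1 ^ 1 * X 2 ^ 1 * G2) = 0 := by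
  have h : ((X 0:P3) ^ 1 * X 1 ^ 1 * X 2 ^ 1 * G2) = X 0 ^ 1 * X 1 ^ 4 * X 2 ^ 1 + 2 * (X 0 ^ 3 * X 1 ^ 2 * X 2 ^ 1) - 2 * (X 0 ^ 2 * X 1 ^ 3 * X 2 ^ 1) := by
    rw [G2_def]; ring
  rw [h, Lfun_apply]
  simp only [coeff_add, coeff_sub, coeff_two_mul, coeff_ee]
  norm_num

lemma Lcase_G2_1_2_0 : Lfun ((X 0:P3) ^ 1 * X 1 ^ 2 * X 2 ^ 0 * G2) = 0 := by
  have h : ((X 0:P3) ^ 1 * X 1 ^ 2 * X 2 ^ 0 * G2) = X 0 ^ 1 * X 1 ^ 5 * X 2 ^ 0 + 2 * (X 0 ^ 3 * X 1 ^ 3 * X 2 ^ 0) - 2 * (X 0 ^ 2 * X 1 ^ 4 * X 2 ^ 0) := by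
    rw [G2_def]; ring
  rw [h, Lfun_apply]
  simp only [coeff_add, coeff_sub, coeff_two_mul, coeff_ee]
  norm_num

lemma Lcase_G2_2_0_1 : Lfun ((X 0:P3) ^ 2 * X 1 ^ 0 * X 2 ^ 1 * G2) = 0 := by
  have h : ((X 0:P3) ^ 2 * X 1 ^ 0 * X 2 ^ 1 * G2) = X 0 ^ 2 * X 1 ^ 3 * X 2 ^ 1 + 2 * (X 0 ^ 4 * X 1 ^ 1 * X 2 ^ 1) - 2 * (X 0 ^ 3 * X 1 ^ 2 * X 2 ^ 1) := by
    rw [G2_def]; ring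
  rw [h, Lfun_apply]
  simp only [coeff_add, coeff_sub, coeff_two_mul, coeff_ee]
  norm_num

lemma Lcase_G2_2_1_0 : Lfun ((X 0:P3) ^ 2 * X 1 ^ 1 * X 2 ^ 0 * G2) = 0 := by
  have h : ((X 0:P3) ^ 2 * X 1 ^ 1 * X 2 ^ 0 * G2) = X 0 ^ 2 * X 1 ^ 4 * X 2 ^ 0 + 2 * (X 0 ^ 4 * X 1 ^ 2 * X 2 ^ 0) - 2 * (X 0 ^ 3 * X 1 ^ 3 * X 2 ^ 0) := by
    rw [G2_def]; ring
  rw [h, Lfun_apply]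
  simp only [coeff_add, coeff_sub, coeff_two_mul, coeff_ee]
  norm_num

lemma Lcase_G2_3_0_0 : Lfun ((X 0:P3) ^ 3 * X 1 ^ 0 * X 2 ^ 0 * G2) = 0 := by
  have h : ((X 0:P3) ^ 3 * X 1 ^ 0 * X 2 ^ 0 * G2) = X 0 ^ 3 * X 1 ^ 3 * X 2 ^ 0 + 2 * (X 0 ^ 5 * X 1 ^ 1 * X 2 ^ 0) - 2 * (X 0 ^ 4 * X 1 ^ 2 * X 2 ^ 0) := by
    rw [G2_def]; ring
  rw [h, Lfun_apply]
  simp only [coeff_add, coeff_sub, coeff_two_mul, coeff_ee]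
  norm_num

lemma Lcase_G3_0_0_2 : Lfun ((X 0:P3) ^ 0 * X 1 ^ 0 * X 2 ^ 2 * G3) = 0 := by
  have h : ((X 0:P3) ^ 0 * X 1 ^ 0 * X 2 ^ 2 * G3) = X 0 ^ 4 * X 1 ^ 0 * X 2 ^ 2 := by
    rw [G3_def]; ring
  rw [h, Lfun_apply]
  simp only [coeff_add, coeff_sub, coeff_two_mul, coeff_ee]
  norm_num

lemma Lcase_G3_0_1_1 : Lfun ((X 0:P3) ^ 0 * X 1 ^ 1 * X 2 ^ 1 * G3) = 0 := by
  have h : ((X 0:P3) ^ 0 * X 1 ^ 1 * X 2 ^ 1 * G3) = X 0 ^ 4 * X 1 ^ 1 * X 2 ^ 1 := by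
    rw [G3_def]; ring
  rw [h, Lfun_apply]
  simp only [coeff_add, coeff_sub, coeff_two_mul, coeff_ee]
  norm_num

lemma Lcase_G3_0_2_0 : Lfun ((X 0:P3) ^ 0 * X 1 ^ 2 * X 2 ^ 0 * G3) = 0 := by
  have h : ((X 0:P3) ^ 0 * X 1 ^ 2 * X 2 ^ 0 * G3) = X 0 ^ 4 * X 1 ^ 2 * X 2 ^ 0 := by
    rw [G3_def]; ring
  rw [h, Lfun_apply]
  simp only [coeff_add, coeff_sub, coeff_two_mul, coeff_ee]
  norm_num

lemma Lcase_G3_1_0_1 : Lfun ((X 0:P3) ^ 1 * X 1 ^ 0 * X 2 ^ 1 * G3) = 0 := by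
  have h : ((X 0:P3) ^ 1 * X 1 ^ 0 * X 2 ^ 1 * G3) = X 0 ^ 5 * X 1 ^ 0 * X 2 ^ 1 := by
    rw [G3_def]; ring
  rw [h, Lfun_apply]
  simp only [coeff_add, coeff_sub, coeff_two_mul, coeff_ee]
  norm_num

lemma Lcase_G3_1_1_0 : Lfun ((X 0:P3) ^ 1 * X 1 ^ 1 * X 2 ^ 0 * G3) = 0 := by
  have h : ((X 0:P3) ^ 1 * X 1 ^ 1 * X 2 ^ 0 * G3) = X 0 ^ 5 * X 1 ^ 1 * X 2 ^ 0 := by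
    rw [G3_def]; ring
  rw [h, Lfun_apply]
  simp only [coeff_add, coeff_sub, coeff_two_mul, coeff_ee]
  norm_num

lemma Lcase_G3_2_0_0 : Lfun ((X 0:P3) ^ 2 * X 1 ^ 0 * X 2 ^ 0 * G3) = 0 := by
  have h : ((X 0:P3) ^ 2 * X 1 ^ 0 * X 2 ^ 0 * G3) = X 0 ^ 6 * X 1 ^ 0 * X 2 ^ 0 := by
    rw [G3_def]; ring
  rw [h, Lfun_apply]
  simp only [coeff_add, coeff_sub, coeff_two_mul, coeff_ee]
  norm_num

lemma Lvanish_G1 (f : P3) : Lfun (f * G1) = 0 := by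
  refine Lfun_mul_eq_zero G1 2 (by norm_num) hG1hom ?_ f
  intro a b c habc
  have ha : a ≤ 4 := by omega
  interval_cases a
  · have hb : b ≤ 4 := by omega
    interval_cases b
    · obtain rfl : c = 4 := by omega
      exact Lcase_G1_0_0_4
    · obtain rfl : c = 3 := by omega
      exact Lcase_G1_0_1_3
    · obtain rfl : c = 2 := by omega
      exact Lcase_G1_0_2_2
    · obtain rfl : c = 1 := by omega
      exact Lcase_G1_0_3_1
    · obtain rfl : c = 0 := by omega
      exact Lcase_G1_0_4_0
  · have hb : b ≤ 3 := by omega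
    interval_cases b
    · obtain rfl : c = 3 := by omega
      exact Lcase_G1_1_0_3
    · obtain rfl : c = 2 := by omega
      exact Lcase_G1_1_1_2
    · obtain rfl : c = 1 := by omega
      exact Lcase_G1_1_2_1
    · obtain rfl : c = 0 := by omega
      exact Lcase_G1_1_3_0
  · have hb : b ≤ 2 := by omega
    interval_cases b
    · obtain rfl : c = 2 := by omega
      exact Lcase_G1_2_0_2
    · obtain rfl : c = 1 := by omega
      exact Lcase_G1_2_1_1
    · obtain rfl : c = 0 := by omega
      exact Lcase_G1_2_2_0
  · have hb : b ≤ 1 := by omega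
    interval_cases b
    · obtain rfl : c = 1 := by omega
      exact Lcase_G1_3_0_1
    · obtain rfl : c = 0 := by omega
      exact Lcase_G1_3_1_0
  · have hb : b ≤ 0 := by omega
    interval_cases b
    · obtain rfl : c = 0 := by omega
      exact Lcase_G1_4_0_0

lemma Lvanish_G2 (f : P3) : Lfun (f * G2) = 0 := by
  refine Lfun_mul_eq_zero G2 3 (by norm_num) hG2hom ?_ f
  intro a b c habc
  have ha : a ≤ 3 := by omega
  interval_cases a
  · have hb : b ≤ 3 := by omega
    interval_cases b
    · obtain rfl : c = 3 := by omega
      exact Lcase_G2_0_0_3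
    · obtain rfl : c = 2 := by omega
      exact Lcase_G2_0_1_2
    · obtain rfl : c = 1 := by omega
      exact Lcase_G2_0_2_1
    · obtain rfl : c = 0 := by omega
      exact Lcase_G2_0_3_0
  · have hb : b ≤ 2 := by omega
    interval_cases b
    · obtain rfl : c = 2 := by omega
      exact Lcase_G2_1_0_2
    · obtain rfl : c = 1 := by omega
      exact Lcase_G2_1_1_1
    · obtain rfl : c = 0 := by omega
      exact Lcase_G2_1_2_0
  · have hb : b ≤ 1 := by omega
    interval_cases b
    · obtain rfl : c = 1 := by omega
      exact Lcase_G2_2_0_1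
    · obtain rfl : c = 0 := by omega
      exact Lcase_G2_2_1_0
  · have hb : b ≤ 0 := by omega
    interval_cases b
    · obtain rfl : c = 0 := by omega
      exact Lcase_G2_3_0_0

lemma Lvanish_G3 (f : P3) : Lfun (f * G3) = 0 := by
  refine Lfun_mul_eq_zero G3 4 (by norm_num) hG3hom ?_ f
  intro a b c habc
  have ha : a ≤ 2 := by omega
  interval_cases a
  · have hb : b ≤ 2 := by omega
    interval_cases b
    · obtain rfl : c = 2 := by omega
      exact Lcase_G3_0_0_2
    · obtain rfl : c = 1 := by omega
      exact Lcase_G3_0_1_1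
    · obtain rfl : c = 0 := by omega
      exact Lcase_G3_0_2_0
  · have hb : b ≤ 1 := by omega
    interval_cases b
    · obtain rfl : c = 1 := by omega
      exact Lcase_G3_1_0_1
    · obtain rfl : c = 0 := by omega
      exact Lcase_G3_1_1_0
  · have hb : b ≤ 0 := by omega
    interval_cases b
    · obtain rfl : c = 0 := by omega
      exact Lcase_G3_2_0_0

lemma Lfun_Pc : Lfun Pc = 1 := by
  rw [Pc_def]
  rw [show ((X 0:P3) ^ 3 * X 1 ^ 2 * X 2) = X 0 ^ 3 * X 1 ^ 2 * X 2 ^ 1 from by ring, Lfun_apply]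
  simp only [coeff_ee]
  norm_num

lemma Scase_0_0_6 : Ideal.Quotient.mk flagRelIdeal ((X 0:P3) ^ 0 * X 1 ^ 0 * X 2 ^ 6) ∈
    Submodule.span ℚ {Ideal.Quotient.mk flagRelIdeal Pc} := by
  apply span_helper 0
  rw [hC0]
  exact mem_I (X 2 ^ 4 + X 1 ^ 1*X 2 ^ 3 + X 0 ^ 1*X 1 ^ 1*X 2 ^ 2 + -(X 0 ^ 2*X 2 ^ 2)) (-(X 2 ^ 3) + -(X 0 ^ 1*X 2 ^ 2)) (X 2 ^ 2)
    (by rw [G1_def, G2_def, G3_def, Pc_def]; ring)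

lemma Scase_0_1_5 : Ideal.Quotient.mk flagRelIdeal ((X 0:P3) ^ 0 * X 1 ^ 1 * X 2 ^ 5) ∈
    Submodule.span ℚ {Ideal.Quotient.mk flagRelIdeal Pc} := by
  apply span_helper 0
  rw [hC0]
  exact mem_I (X 1 ^ 1*X 2 ^ 3 + X 1 ^ 2*X 2 ^ 2 + X 0 ^ 1*X 1 ^ 2*X 2 ^ 1 + -(X 0 ^ 2*X 1 ^ 1*X 2 ^ 1)) (-(X 1 ^ 1*X 2 ^ 2) + -(X 0 ^ 1*X 1 ^ 1*X 2 ^ 1)) (X 1 ^ 1*X 2 ^ 1)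
    (by rw [G1_def, G2_def, G3_def, Pc_def]; ring)

lemma Scase_0_2_4 : Ideal.Quotient.mk flagRelIdeal ((X 0:P3) ^ 0 * X 1 ^ 2 * X 2 ^ 4) ∈
    Submodule.span ℚ {Ideal.Quotient.mk flagRelIdeal Pc} := by
  apply span_helper 0
  rw [hC0]
  exact mem_I (X 1 ^ 2*X 2 ^ 2 + X 1 ^ 3*X 2 ^ 1 + X 0 ^ 1*X 1 ^ 3 + -(X 0 ^ 2*X 1 ^ 2)) (-(X 1 ^ 2*X 2 ^ 1) + -(X 0 ^ 1*X 1 ^ 2)) (X 1 ^ 2)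
    (by rw [G1_def, G2_def, G3_def, Pc_def]; ring)

lemma Scase_0_3_3 : Ideal.Quotient.mk flagRelIdeal ((X 0:P3) ^ 0 * X 1 ^ 3 * X 2 ^ 3) ∈
    Submodule.span ℚ {Ideal.Quotient.mk flagRelIdeal Pc} := by
  apply span_helper 0
  rw [hC0]
  exact mem_I ((2:P3) * (X 1 ^ 3*X 2 ^ 1) + -((2:P3) * (X 0 ^ 1*X 1 ^ 2*X 2 ^ 1)) + (2:P3) * (X 0 ^ 1*X 1 ^ 3) + (2:P3) * (X 0 ^ 2*X 1 ^ 1*X 2 ^ 1) + -((2:P3) * (X 0 ^ 2*X 1 ^ 2))) (-(X 2 ^ 3) + (2:P3) * (X 1 ^ 1*X 2 ^ 2) + -((2:P3) * (X 1 ^ 2*X 2 ^ 1)) + (2:P3) * (X 0 ^ 1*X 1 ^ 1*X 2 ^ 1) + -((2:P3) * (X 0 ^ 1*X 1 ^ 2))) (-((2:P3) * (X 1 ^ 1*X 2 ^ 1)) + (2:P3) * (X 1 ^ 2))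
    (by rw [G1_def, G2_def, G3_def, Pc_def]; ring)

lemma Scase_0_4_2 : Ideal.Quotient.mk flagRelIdeal ((X 0:P3) ^ 0 * X 1 ^ 4 * X 2 ^ 2) ∈
    Submodule.span ℚ {Ideal.Quotient.mk flagRelIdeal Pc} := by
  apply span_helper 0
  rw [hC0]
  exact mem_I ((2:P3) * (X 1 ^ 3*X 2 ^ 1) + -((4:P3) * (X 0 ^ 1*X 1 ^ 2*X 2 ^ 1)) + (2:P3) * (X 0 ^ 1*X 1 ^ 3) + (4:P3) * (X 0 ^ 2*X 1 ^ 1*X 2 ^ 1) + -((2:P3) * (X 0 ^ 2*X 1 ^ 2))) (-((2:P3) * (X 2 ^ 3)) + (3:P3) * (X 1 ^ 1*X 2 ^ 2) + -((2:P3) * (X 1 ^ 2*X 2 ^ 1)) + (4:P3) * (X 0 ^ 1*X 1 ^ 1*X 2 ^ 1) + -((2:P3) * (X 0 ^ 1*X 1 ^ 2))) (-((4:P3) * (X 1 ^ 1*X 2 ^ 1)) + (2:P3) * (X 1 ^ 2))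
    (by rw [G1_def, G2_def, G3_def, Pc_def]; ring)

lemma Scase_0_5_1 : Ideal.Quotient.mk flagRelIdeal ((X 0:P3) ^ 0 * X 1 ^ 5 * X 2 ^ 1) ∈
    Submodule.span ℚ {Ideal.Quotient.mk flagRelIdeal Pc} := by
  apply span_helper 0
  rw [hC0]
  exact mem_I ((2:P3) * (X 1 ^ 3*X 2 ^ 1) + -((4:P3) * (X 0 ^ 1*X 1 ^ 2*X 2 ^ 1)) + (4:P3) * (X 0 ^ 2*X 1 ^ 1*X 2 ^ 1)) (-((2:P3) * (X 2 ^ 3)) + (2:P3) * (X 1 ^ 1*X 2 ^ 2) + -(X 1 ^ 2*X 2 ^ 1) + (4:P3) * (X 0 ^ 1*X 1 ^ 1*X 2 ^ 1)) (-((4:P3) * (X 1 ^ 1*X 2 ^ 1)))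
    (by rw [G1_def, G2_def, G3_def, Pc_def]; ring)

lemma Scase_0_6_0 : Ideal.Quotient.mk flagRelIdeal ((X 0:P3) ^ 0 * X 1 ^ 6 * X 2 ^ 0) ∈
    Submodule.span ℚ {Ideal.Quotient.mk flagRelIdeal Pc} := by
  apply span_helper 0
  rw [hC0]
  exact mem_I ((2:P3) * (X 1 ^ 4) + -((4:P3) * (X 0 ^ 1*X 1 ^ 3)) + (4:P3) * (X 0 ^ 2*X 1 ^ 2)) (-((2:P3) * (X 1 ^ 1*X 2 ^ 2)) + (2:P3) * (X 1 ^ 2*X 2 ^ 1) + -(X 1 ^ 3) + (4:P3) * (X 0 ^ 1*X 1 ^ 2)) (-((4:P3) * (X 1 ^ 2)))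
    (by rw [G1_def, G2_def, G3_def, Pc_def]; ring)

lemma Scase_1_0_5 : Ideal.Quotient.mk flagRelIdeal ((X 0:P3) ^ 1 * X 1 ^ 0 * X 2 ^ 5) ∈
    Submodule.span ℚ {Ideal.Quotient.mk flagRelIdeal Pc} := by
  apply span_helper 0
  rw [hC0]
  exact mem_I (-(X 1 ^ 3*X 2 ^ 1) + X 0 ^ 1*X 2 ^ 3 + X 0 ^ 1*X 1 ^ 1*X 2 ^ 2 + (2:P3) * (X 0 ^ 1*X 1 ^ 2*X 2 ^ 1) + -(X 0 ^ 2*X 1 ^ 1*X 2 ^ 1) + -(X 0 ^ 3*X 2 ^ 1)) (X 2 ^ 3 + -(X 1 ^ 1*X 2 ^ 2) + X 1 ^ 2*X 2 ^ 1 + -(X 0 ^ 1*X 2 ^ 2) + -(X 0 ^ 1*X 1 ^ 1*X 2 ^ 1)) (X 0 ^ 1*X 2 ^ 1)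
    (by rw [G1_def, G2_def, G3_def, Pc_def]; ring)

lemma Scase_1_1_4 : Ideal.Quotient.mk flagRelIdeal ((X 0:P3) ^ 1 * X 1 ^ 1 * X 2 ^ 4) ∈
    Submodule.span ℚ {Ideal.Quotient.mk flagRelIdeal Pc} := by
  apply span_helper 0
  rw [hC0]
  exact mem_I (-(X 1 ^ 4) + X 0 ^ 1*X 1 ^ 1*X 2 ^ 2 + X 0 ^ 1*X 1 ^ 2*X 2 ^ 1 + (2:P3) * (X 0 ^ 1*X 1 ^ 3) + -(X 0 ^ 2*X 1 ^ 2) + -(X 0 ^ 3*X 1 ^ 1)) (X 1 ^ 1*X 2 ^ 2 + -(X 1 ^ 2*X 2 ^ 1) + X 1 ^ 3 + -(X 0 ^ 1*X 1 ^ 1*X 2 ^ 1) + -(X 0 ^ 1*X 1 ^ 2)) (X 0 ^ 1*X 1 ^ 1)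
    (by rw [G1_def, G2_def, G3_def, Pc_def]; ring)

lemma Scase_1_2_3 : Ideal.Quotient.mk flagRelIdeal ((X 0:P3) ^ 1 * X 1 ^ 2 * X 2 ^ 3) ∈
    Submodule.span ℚ {Ideal.Quotient.mk flagRelIdeal Pc} := by
  apply span_helper 1
  rw [hC1]
  exact mem_I (X 1 ^ 3*X 2 ^ 1 + -((2:P3) * (X 1 ^ 4)) + -(X 0 ^ 1*X 1 ^ 2*X 2 ^ 1) + (4:P3) * (X 0 ^ 1*X 1 ^ 3) + (2:P3) * (X 0 ^ 2*X 1 ^ 1*X 2 ^ 1) + -((2:P3) * (X 0 ^ 2*X 1 ^ 2)) + -((2:P3) * (X 0 ^ 3*X 1 ^ 1))) (-(X 2 ^ 3) + (3:P3) * (X 1 ^ 1*X 2 ^ 2) + -((3:P3) * (X 1 ^ 2*X 2 ^ 1)) + (2:P3) * (X 1 ^ 3) + X 0 ^ 1*X 2 ^ 2 + -((2:P3) * (X 0 ^ 1*X 1 ^ 2))) (-((2:P3) * (X 1 ^ 1*X 2 ^ 1)) + (2:P3) * (X 0 ^ 1*X 1 ^ 1))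
    (by rw [G1_def, G2_def, G3_def, Pc_def]; ring)

lemma Scase_1_3_2 : Ideal.Quotient.mk flagRelIdeal ((X 0:P3) ^ 1 * X 1 ^ 3 * X 2 ^ 2) ∈
    Submodule.span ℚ {Ideal.Quotient.mk flagRelIdeal Pc} := by
  apply span_helper 2
  rw [hC2]
  exact mem_I ((2:P3) * (X 1 ^ 3*X 2 ^ 1) + -((2:P3) * (X 1 ^ 4)) + -((4:P3) * (X 0 ^ 1*X 1 ^ 2*X 2 ^ 1)) + (4:P3) * (X 0 ^ 1*X 1 ^ 3) + (4:P3) * (X 0 ^ 2*X 1 ^ 1*X 2 ^ 1) + -((2:P3) * (X 0 ^ 2*X 1 ^ 2)) + -((2:P3) * (X 0 ^ 3*X 1 ^ 1))) (-((2:P3) * (X 2 ^ 3)) + (4:P3) * (X 1 ^ 1*X 2 ^ 2) + -((4:P3) * (X 1 ^ 2*X 2 ^ 1)) + (2:P3) * (X 1 ^ 3) + X 0 ^ 1*X 2 ^ 2 + (2:P3) * (X 0 ^ 1*X 1 ^ 1*X 2 ^ 1) + -((2:P3) * (X 0 ^ 1*X 1 ^ 2))) (-((4:P3) * (X 1 ^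 1*X 2 ^ 1)) + (2:P3) * (X 0 ^ 1*X 1 ^ 1))
    (by rw [G1_def, G2_def, G3_def, Pc_def]; ring)

lemma Scase_1_4_1 : Ideal.Quotient.mk flagRelIdeal ((X 0:P3) ^ 1 * X 1 ^ 4 * X 2 ^ 1) ∈
    Submodule.span ℚ {Ideal.Quotient.mk flagRelIdeal Pc} := by
  apply span_helper 2
  rw [hC2]
  exact mem_I ((2:P3) * (X 1 ^ 3*X 2 ^ 1) + -((4:P3) * (X 0 ^ 1*X 1 ^ 2*X 2 ^ 1)) + (4:P3) * (X 0 ^ 2*X 1 ^ 1*X 2 ^ 1)) (-((2:P3) * (X 2 ^ 3)) + (2:P3) * (X 1 ^ 1*X 2 ^ 2) + -((2:P3) * (X 1 ^ 2*X 2 ^ 1)) + (3:P3) * (X 0 ^ 1*X 1 ^ 1*X 2 ^ 1)) (-((4:P3) * (X 1 ^ 1*X 2 ^ 1)))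
    (by rw [G1_def, G2_def, G3_def, Pc_def]; ring)

lemma Scase_1_5_0 : Ideal.Quotient.mk flagRelIdeal ((X 0:P3) ^ 1 * X 1 ^ 5 * X 2 ^ 0) ∈
    Submodule.span ℚ {Ideal.Quotient.mk flagRelIdeal Pc} := by
  apply span_helper 0
  rw [hC0]
  exact mem_I ((4:P3) * (X 1 ^ 4) + -((6:P3) * (X 0 ^ 1*X 1 ^ 3)) + (4:P3) * (X 0 ^ 2*X 1 ^ 2) + (4:P3) * (X 0 ^ 3*X 1 ^ 1)) (-((4:P3) * (X 1 ^ 1*X 2 ^ 2)) + (4:P3) * (X 1 ^ 2*X 2 ^ 1) + -((4:P3) * (X 1 ^ 3)) + -((2:P3) * (X 0 ^ 1*X 2 ^ 2)) + (2:P3) * (X 0 ^ 1*X 1 ^ 1*X 2 ^ 1) + (3:P3) * (X 0 ^ 1*X 1 ^ 2)) (-((4:P3) * (X 0 ^ 1*X 1 ^ 1)))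
    (by rw [G1_def, G2_def, G3_def, Pc_def]; ring)

lemma Scase_2_0_4 : Ideal.Quotient.mk flagRelIdeal ((X 0:P3) ^ 2 * X 1 ^ 0 * X 2 ^ 4) ∈
    Submodule.span ℚ {Ideal.Quotient.mk flagRelIdeal Pc} := by
  apply span_helper 0
  rw [hC0]
  exact mem_I (-(X 1 ^ 3*X 2 ^ 1) + -(X 1 ^ 4) + (2:P3) * (X 0 ^ 1*X 1 ^ 2*X 2 ^ 1) + X 0 ^ 1*X 1 ^ 3 + X 0 ^ 2*X 2 ^ 2 + -(X 0 ^ 2*X 1 ^ 1*X 2 ^ 1) + -(X 0 ^ 3*X 1 ^ 1)) (X 2 ^ 3 + X 1 ^ 3 + X 0 ^ 1*X 2 ^ 2 + -((2:P3) * (X 0 ^ 1*X 1 ^ 1*X 2 ^ 1))) (-(X 2 ^ 2) + X 1 ^ 1*X 2 ^ 1 + -(X 1 ^ 2) + X 0 ^ 1*X 1 ^ 1)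
    (by rw [G1_def, G2_def, G3_def, Pc_def]; ring)

lemma Scase_2_1_3 : Ideal.Quotient.mk flagRelIdeal ((X 0:P3) ^ 2 * X 1 ^ 1 * X 2 ^ 3) ∈
    Submodule.span ℚ {Ideal.Quotient.mk flagRelIdeal Pc} := by
  apply span_helper 1
  rw [hC1]
  exact mem_I (-((2:P3) * (X 1 ^ 4)) + (3:P3) * (X 0 ^ 1*X 1 ^ 3) + X 0 ^ 2*X 1 ^ 1*X 2 ^ 1 + -(X 0 ^ 2*X 1 ^ 2) + -((2:P3) * (X 0 ^ 3*X 1 ^ 1))) ((2:P3) * (X 1 ^ 1*X 2 ^ 2) + -((2:P3) * (X 1 ^ 2*X 2 ^ 1)) + (2:P3) * (X 1 ^ 3) + X 0 ^ 1*X 2 ^ 2 + -(X 0 ^ 1*X 1 ^ 1*X 2 ^ 1) + -(X 0 ^ 1*X 1 ^ 2)) (-(X 1 ^ 1*X 2 ^ 1) + -(X 1 ^ 2) + (2:P3) * (X 0 ^ 1*X 1 ^ 1))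
    (by rw [G1_def, G2_def, G3_def, Pc_def]; ring)

lemma Scase_2_2_2 : Ideal.Quotient.mk flagRelIdeal ((X 0:P3) ^ 2 * X 1 ^ 2 * X 2 ^ 2) ∈
    Submodule.span ℚ {Ideal.Quotient.mk flagRelIdeal Pc} := by
  apply span_helper 2
  rw [hC2]
  exact mem_I (X 1 ^ 3*X 2 ^ 1 + -((2:P3) * (X 1 ^ 4)) + -((2:P3) * (X 0 ^ 1*X 1 ^ 2*X 2 ^ 1)) + (3:P3) * (X 0 ^ 1*X 1 ^ 3) + (2:P3) * (X 0 ^ 2*X 1 ^ 1*X 2 ^ 1) + -(X 0 ^ 2*X 1 ^ 2) + -((2:P3) * (X 0 ^ 3*X 1 ^ 1))) (-(X 2 ^ 3) + (3:P3) * (X 1 ^ 1*X 2 ^ 2) + -((3:P3) * (X 1 ^ 2*X 2 ^ 1)) + (2:P3) * (X 1 ^ 3) + X 0 ^ 1*X 2 ^ 2 + -(X 0 ^ 1*X 1 ^ 2)) (-((2:P3) * (X 1 ^ 1*X 2 ^ 1)) + -(X 1 ^ 2) + (2:P3) * (X 0 ^ 1*X 1 ^ 1))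
    (by rw [G1_def, G2_def, G3_def, Pc_def]; ring)

lemma Scase_2_3_1 : Ideal.Quotient.mk flagRelIdeal ((X 0:P3) ^ 2 * X 1 ^ 3 * X 2 ^ 1) ∈
    Submodule.span ℚ {Ideal.Quotient.mk flagRelIdeal Pc} := by
  apply span_helper 2
  rw [hC2]
  exact mem_I (X 1 ^ 3*X 2 ^ 1 + -((2:P3) * (X 0 ^ 1*X 1 ^ 2*X 2 ^ 1)) + (2:P3) * (X 0 ^ 2*X 1 ^ 1*X 2 ^ 1)) (-(X 2 ^ 3) + X 1 ^ 1*X 2 ^ 2 + -(X 1 ^ 2*X 2 ^ 1) + X 0 ^ 1*X 1 ^ 1*X 2 ^ 1) (-((2:P3) * (X 1 ^ 1*X 2 ^ 1)))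
    (by rw [G1_def, G2_def, G3_def, Pc_def]; ring)

lemma Scase_2_4_0 : Ideal.Quotient.mk flagRelIdeal ((X 0:P3) ^ 2 * X 1 ^ 4 * X 2 ^ 0) ∈
    Submodule.span ℚ {Ideal.Quotient.mk flagRelIdeal Pc} := by
  apply span_helper 0
  rw [hC0]
  exact mem_I ((3:P3) * (X 1 ^ 4) + -((4:P3) * (X 0 ^ 1*X 1 ^ 3)) + (2:P3) * (X 0 ^ 2*X 1 ^ 2) + (4:P3) * (X 0 ^ 3*X 1 ^ 1)) (-((3:P3) * (X 1 ^ 1*X 2 ^ 2)) + (3:P3) * (X 1 ^ 2*X 2 ^ 1) + -((3:P3) * (X 1 ^ 3)) + -((2:P3) * (X 0 ^ 1*X 2 ^ 2)) + (2:P3) * (X 0 ^ 1*X 1 ^ 1*X 2 ^ 1) + X 0 ^ 1*X 1 ^ 2) ((2:P3) * (X 1 ^ 2) + -((4:P3) * (X 0 ^ 1*X 1 ^ 1)))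
    (by rw [G1_def, G2_def, G3_def, Pc_def]; ring)

lemma Scase_3_0_3 : Ideal.Quotient.mk flagRelIdeal ((X 0:P3) ^ 3 * X 1 ^ 0 * X 2 ^ 3) ∈
    Submodule.span ℚ {Ideal.Quotient.mk flagRelIdeal Pc} := by
  apply span_helper 0
  rw [hC0]
  exact mem_I (-(X 1 ^ 4) + X 0 ^ 1*X 1 ^ 3 + X 0 ^ 3*X 2 ^ 1 + -(X 0 ^ 3*X 1 ^ 1)) (X 1 ^ 1*X 2 ^ 2 + -(X 1 ^ 2*X 2 ^ 1) + X 1 ^ 3 + X 0 ^ 1*X 2 ^ 2 + -(X 0 ^ 1*X 1 ^ 1*X 2 ^ 1)) (X 1 ^ 1*X 2 ^ 1 + -(X 1 ^ 2) + -(X 0 ^ 1*X 2 ^ 1) + X 0 ^ 1*X 1 ^ 1)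
    (by rw [G1_def, G2_def, G3_def, Pc_def]; ring)

lemma Scase_3_1_2 : Ideal.Quotient.mk flagRelIdeal ((X 0:P3) ^ 3 * X 1 ^ 1 * X 2 ^ 2) ∈
    Submodule.span ℚ {Ideal.Quotient.mk flagRelIdeal Pc} := by
  apply span_helper 1
  rw [hC1]
  exact mem_I (-(X 1 ^ 4) + X 0 ^ 1*X 1 ^ 3 + -(X 0 ^ 3*X 1 ^ 1)) (X 1 ^ 1*X 2 ^ 2 + -(X 1 ^ 2*X 2 ^ 1) + X 1 ^ 3 + X 0 ^ 1*X 2 ^ 2 + -(X 0 ^ 1*X 1 ^ 1*X 2 ^ 1)) (-(X 1 ^ 2) + X 0 ^ 1*X 1 ^ 1)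
    (by rw [G1_def, G2_def, G3_def, Pc_def]; ring)

lemma Scase_3_2_1 : Ideal.Quotient.mk flagRelIdeal ((X 0:P3) ^ 3 * X 1 ^ 2 * X 2 ^ 1) ∈
    Submodule.span ℚ {Ideal.Quotient.mk flagRelIdeal Pc} := by
  apply span_helper 1
  rw [hC1]
  exact mem_I 0 0 0
    (by rw [G1_def, G2_def, G3_def, Pc_def]; ring)

lemma Scase_3_3_0 : Ideal.Quotient.mk flagRelIdeal ((X 0:P3) ^ 3 * X 1 ^ 3 * X 2 ^ 0) ∈
    Submodule.span ℚ {Ideal.Quotient.mk flagRelIdeal Pc} := by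
  apply span_helper 0
  rw [hC0]
  exact mem_I (X 1 ^ 4 + -(X 0 ^ 1*X 1 ^ 3) + (2:P3) * (X 0 ^ 3*X 1 ^ 1)) (-(X 1 ^ 1*X 2 ^ 2) + X 1 ^ 2*X 2 ^ 1 + -(X 1 ^ 3) + -(X 0 ^ 1*X 2 ^ 2) + X 0 ^ 1*X 1 ^ 1*X 2 ^ 1) ((2:P3) * (X 1 ^ 2) + -((2:P3) * (X 0 ^ 1*X 1 ^ 1)))
    (by rw [G1_def, G2_def, G3_def, Pc_def]; ring)

lemma Scase_4_0_2 : Ideal.Quotient.mk flagRelIdeal ((X 0:P3) ^ 4 * X 1 ^ 0 * X 2 ^ 2) ∈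
    Submodule.span ℚ {Ideal.Quotient.mk flagRelIdeal Pc} := by
  apply span_helper 0
  rw [hC0]
  exact mem_I 0 0 (X 2 ^ 2)
    (by rw [G1_def, G2_def, G3_def, Pc_def]; ring)

lemma Scase_4_1_1 : Ideal.Quotient.mk flagRelIdeal ((X 0:P3) ^ 4 * X 1 ^ 1 * X 2 ^ 1) ∈
    Submodule.span ℚ {Ideal.Quotient.mk flagRelIdeal Pc} := by
  apply span_helper 0
  rw [hC0]
  exact mem_I 0 0 (X 1 ^ 1*X 2 ^ 1)
    (by rw [G1_def, G2_def, G3_def, Pc_def]; ring)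

lemma Scase_4_2_0 : Ideal.Quotient.mk flagRelIdeal ((X 0:P3) ^ 4 * X 1 ^ 2 * X 2 ^ 0) ∈
    Submodule.span ℚ {Ideal.Quotient.mk flagRelIdeal Pc} := by
  apply span_helper 0
  rw [hC0]
  exact mem_I 0 0 (X 1 ^ 2)
    (by rw [G1_def, G2_def, G3_def, Pc_def]; ring)

lemma Scase_5_0_1 : Ideal.Quotient.mk flagRelIdeal ((X 0:P3) ^ 5 * X 1 ^ 0 * X 2 ^ 1) ∈
    Submodule.span ℚ {Ideal.Quotient.mk flagRelIdeal Pc} := by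
  apply span_helper 0
  rw [hC0]
  exact mem_I 0 0 (X 0 ^ 1*X 2 ^ 1)
    (by rw [G1_def, G2_def, G3_def, Pc_def]; ring)

lemma Scase_5_1_0 : Ideal.Quotient.mk flagRelIdeal ((X 0:P3) ^ 5 * X 1 ^ 1 * X 2 ^ 0) ∈
    Submodule.span ℚ {Ideal.Quotient.mk flagRelIdeal Pc} := by
  apply span_helper 0
  rw [hC0]
  exact mem_I 0 0 (X 0 ^ 1*X 1 ^ 1)
    (by rw [G1_def, G2_def, G3_def, Pc_def]; ring)

lemma Scase_6_0_0 : Ideal.Quotient.mk flagRelIdeal ((X 0:P3) ^ 6 * X 1 ^ 0 * X 2 ^ 0) ∈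
    Submodule.span ℚ {Ideal.Quotient.mk flagRelIdeal Pc} := by
  apply span_helper 0
  rw [hC0]
  exact mem_I (X 0 ^ 4) 0 (-(X 2 ^ 2) + X 1 ^ 1*X 2 ^ 1 + -(X 1 ^ 2) + X 0 ^ 1*X 1 ^ 1)
    (by rw [G1_def, G2_def, G3_def, Pc_def]; ring)

lemma span_cases (a b c : ℕ) (h : a + b + c = 6) :
    Ideal.Quotient.mk flagRelIdeal ((X 0:P3) ^ a * X 1 ^ b * X 2 ^ c) ∈
    Submodule.span ℚ {Ideal.Quotient.mk flagRelIdeal Pc} := by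
  have ha : a ≤ 6 := by omega
  interval_cases a
  · have hb : b ≤ 6 := by omega
    interval_cases b
    · obtain rfl : c = 6 := by omega
      exact Scase_0_0_6
    · obtain rfl : c = 5 := by omega
      exact Scase_0_1_5
    · obtain rfl : c = 4 := by omega
      exact Scase_0_2_4
    · obtain rfl : c = 3 := by omega
      exact Scase_0_3_3
    · obtain rfl : c = 2 := by omega
      exact Scase_0_4_2
    · obtain rfl : c = 1 := by omega
      exact Scase_0_5_1
    · obtain rfl : c = 0 := by omega
      exact Scase_0_6_0
  · have hb : b ≤ 5 := by omega
    interval_cases b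
    · obtain rfl : c = 5 := by omega
      exact Scase_1_0_5
    · obtain rfl : c = 4 := by omega
      exact Scase_1_1_4
    · obtain rfl : c = 3 := by omega
      exact Scase_1_2_3
    · obtain rfl : c = 2 := by omega
      exact Scase_1_3_2
    · obtain rfl : c = 1 := by omega
      exact Scase_1_4_1
    · obtain rfl : c = 0 := by omega
      exact Scase_1_5_0
  · have hb : b ≤ 4 := by omega
    interval_cases b
    · obtain rfl : c = 4 := by omega
      exact Scase_2_0_4
    · obtain rfl : c = 3 := by omega
      exact Scase_2_1_3
    · obtain rfl : c = 2 := by omega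
      exact Scase_2_2_2
    · obtain rfl : c = 1 := by omega
      exact Scase_2_3_1
    · obtain rfl : c = 0 := by omega
      exact Scase_2_4_0
  · have hb : b ≤ 3 := by omega
    interval_cases b
    · obtain rfl : c = 3 := by omega
      exact Scase_3_0_3
    · obtain rfl : c = 2 := by omega
      exact Scase_3_1_2
    · obtain rfl : c = 1 := by omega
      exact Scase_3_2_1
    · obtain rfl : c = 0 := by omega
      exact Scase_3_3_0
  · have hb : b ≤ 2 := by omega
    interval_cases b
    · obtain rfl : c = 2 := by omega
      exact Scase_4_0_2
    · obtain rfl : c = 1 := by omega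
      exact Scase_4_1_1
    · obtain rfl : c = 0 := by omega
      exact Scase_4_2_0
  · have hb : b ≤ 1 := by omega
    interval_cases b
    · obtain rfl : c = 1 := by omega
      exact Scase_5_0_1
    · obtain rfl : c = 0 := by omega
      exact Scase_5_1_0
  · have hb : b ≤ 0 := by omega
    interval_cases b
    · obtain rfl : c = 0 := by omega
      exact Scase_6_0_0

lemma Pc_not_mem : Pc ∉ flagRelIdeal := by
  intro hp
  rw [flagRelIdeal, Ideal.mem_span_insert] at hp
  obtain ⟨c1, z1, hz1, hp⟩ := hp
  rw [Ideal.mem_span_insert] at hz1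
  obtain ⟨c2, z2, hz2, hz1⟩ := hz1
  rw [Ideal.mem_span_singleton'] at hz2
  obtain ⟨c3, hz2⟩ := hz2
  have h1 : Pc = c1 * G1 + c2 * G2 + c3 * G3 := by
    rw [G1_def, G2_def, G3_def]
    rw [hp, hz1, ← hz2]; ring
  have h2 : Lfun Pc = Lfun (c1 * G1) + Lfun (c2 * G2) + Lfun (c3 * G3) := by
    rw [h1, map_add, map_add]
  rw [Lvanish_G1, Lvanish_G2, Lvanish_G3, Lfun_Pc] at h2
  norm_num at h2

lemma mk_Pc_ne_zero : Ideal.Quotient.mk flagRelIdeal Pc ≠ 0 := fun h =>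
  Pc_not_mem ((Ideal.Quotient.eq_zero_iff_mem).1 h)

lemma himg : (MvPolynomial.homogeneousSubmodule (Fin 3) ℚ 6).map
      (Ideal.Quotient.mkₐ ℚ flagRelIdeal).toLinearMap =
    Submodule.span ℚ {Ideal.Quotient.mk flagRelIdeal Pc} := by
  apply le_antisymm
  · intro x hx
    obtain ⟨f, hf, rfl⟩ := hx
    have hf6 : f.IsHomogeneous 6 := (mem_homogeneousSubmodule _ _).1 hf
    show Ideal.Quotient.mk flagRelIdeal f ∈ _
    rw [f.as_sum, map_sum]
    apply Submodule.sum_mem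
    intro u hu
    have hu6 : u 0 + u 1 + u 2 = 6 := by
      have hne : coeff u f ≠ 0 := mem_support_iff.1 hu
      have hdeg : u.degree = 6 := by
        by_contra hd
        exact hne (hf6.coeff_eq_zero hd)
      rwa [degree_three] at hdeg
    have hmono : (monomial u (coeff u f) : P3) =
        coeff u f • (X 0 ^ (u 0) * X 1 ^ (u 1) * X 2 ^ (u 2)) := by
      rw [← monomial_ee, ee_eq, smul_monomial, smul_eq_mul, mul_one]
    have hsm : Ideal.Quotient.mk flagRelIdeal
        (coeff u f • (X 0 ^ u 0 * X 1 ^ u 1 * X 2 ^ u 2)) =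
        coeff u f • Ideal.Quotient.mk flagRelIdeal (X 0 ^ u 0 * X 1 ^ u 1 * X 2 ^ u 2) :=
      map_smul (Ideal.Quotient.mkₐ ℚ flagRelIdeal) _ _
    rw [hmono, hsm]
    exact Submodule.smul_mem _ _ (span_cases (u 0) (u 1) (u 2) hu6)
  · rw [Submodule.span_le, Set.singleton_subset_iff]
    exact ⟨Pc, (mem_homogeneousSubmodule _ _).2 hPchom, rfl⟩

/-- In `R = ℚ[y₁,y₁₂,y₁₂₃]/(relations (iv))`, the degree-6 graded piece (the image
of the homogeneous polynomials of degree 6) is one-dimensional, and the class of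
`y₁³ y₁₂² y₁₂₃` is a nonzero element of it. -/
theorem flag_ring_top_class :
    Module.finrank ℚ
        ((MvPolynomial.homogeneousSubmodule (Fin 3) ℚ 6).map
          (Ideal.Quotient.mkₐ ℚ flagRelIdeal).toLinearMap) = 1 ∧
    Ideal.Quotient.mk flagRelIdeal (X 0 ^ 3 * X 1 ^ 2 * X 2) ≠ 0 ∧
    Ideal.Quotient.mk flagRelIdeal (X 0 ^ 3 * X 1 ^ 2 * X 2) ∈
      (MvPolynomial.homogeneousSubmodule (Fin 3) ℚ 6).map
        (Ideal.Quotient.mkₐ ℚ flagRelIdeal).toLinearMap := by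
  refine ⟨?_, mk_Pc_ne_zero, ?_⟩
  · rw [himg]
    exact finrank_span_singleton mk_Pc_ne_zero
  · exact ⟨Pc, (mem_homogeneousSubmodule _ _).2 hPchom, rfl⟩
end
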